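/- arXiv:2202.07079 — 3 statements merged into one kernel-verified Lean document; each statement's English description precedes it below -/
import Mathlib

section
/- Let $\bar{M} \in \mathbb{R}^{n \times m}$ have rank exactly $r$ (so $\sigma_r(\bar{M}) > 0$ and $\sigma_{r+1}(\bar{M}) = 0$), let $E \in \mathbb{R}^{n \times m}$ be arbitrary, and let $M = \bar{M} + E$. Let $\bar{M} = \bar{U}\bar{S}\bar{V}^\top$ be a compact SVD of $\bar{M}$ and let $USV^\top$ be a rank-$r$ truncated SVD of $M$. Then there exists an orthogonal matrix $H \in \mathbb{R}^{r \times r}$ such that $\|\bar{V}\bar{S}H - VS\| \leq 4\|E\|$, where $\|\cdot\|$ denotes the spectral (operator) norm. -/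
open Matrix

/-- Spectral (operator) norm of a real matrix, viewed as the operator norm of the
induced linear map between Euclidean spaces. -/
noncomputable def opNorm {n m : ℕ} (A : Matrix (Fin n) (Fin m) ℝ) : ℝ :=
  ‖LinearMap.toContinuousLinearMap (Matrix.toEuclideanLin A)‖

/-- Euclidean norm of a vector. -/
noncomputable def vecNorm {d : ℕ} (a : Fin d → ℝ) : ℝ := Real.sqrt (a ⬝ᵥ a)

/-- Weighted norm `‖a‖_Ω = sqrt (aᵀ Ω a)`. -/
noncomputable def wnorm {r : ℕ} (Ω : Matrix (Fin r) (Fin r) ℝ) (a : Fin r → ℝ) : ℝ :=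
  Real.sqrt (a ⬝ᵥ (Ω *ᵥ a))

/-- `k`-th largest singular value of a matrix, characterized as the distance (in the
spectral norm) to the set of matrices of rank `< k` (approximation numbers). -/
noncomputable def singVal {n m : ℕ} (k : ℕ) (A : Matrix (Fin n) (Fin m) ℝ) : ℝ :=
  sInf {c | ∃ B : Matrix (Fin n) (Fin m) ℝ, B.rank < k ∧ c = opNorm (A - B)}

/-!
Put `Mhat = U S Vᵀ`. Since `rank Mbar = r`, `σ_{r+1}(M) ≤ ‖M - Mbar‖ = ‖E‖`, so the residual
hypothesis gives `‖Mbar - Mhat‖ ≤ 2‖E‖`. Let `W = Ubarᵀ U` and take `H` orthogonal with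
`W = R H`, `R = (W Wᵀ)^{1/2}` (polar decomposition). Then
`Vbar Sbar H - V S = Vbar Sbar (H - W) + (Mbar - Mhat)ᵀ U`.
As `0 ≤ R ≤ 1`, `(1 - R)² ≤ 1 - R²`, so `‖Sbar (H - W)‖² ≤ ‖Sbar (1 - W Wᵀ) Sbar‖`, which is
`‖(1 - U Uᵀ) Ubar Sbar‖² = ‖(1 - U Uᵀ) (Mbar - Mhat) Vbar‖² ≤ ‖Mbar - Mhat‖²` because `1 - U Uᵀ`
kills `Mhat`. Both terms are thus at most `‖Mbar - Mhat‖ ≤ 2‖E‖`.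
-/

open scoped Matrix.Norms.L2Operator MatrixOrder

lemma EuclideanSpace.norm_toLp_sq {n : Type*} [Fintype n] (x : n → ℝ) :
    ‖WithLp.toLp 2 x‖ ^ 2 = x ⬝ᵥ x := by
  rw [EuclideanSpace.norm_sq_eq]; simp [dotProduct, sq]

namespace Matrix

variable {l m n k : Type*} [Fintype l] [Fintype m] [Fintype n] [Fintype k]
  [DecidableEq l] [DecidableEq m] [DecidableEq n] [DecidableEq k]

omit [DecidableEq m] [DecidableEq n] in
lemma mulVec_dotProduct_mulVec_self (A : Matrix m n ℝ) (x : n → ℝ) :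
    (A *ᵥ x) ⬝ᵥ (A *ᵥ x) = x ⬝ᵥ ((Aᵀ * A) *ᵥ x) := by
  rw [← mulVec_mulVec, dotProduct_mulVec x Aᵀ, vecMul_transpose]

lemma l2_opNorm_transpose (A : Matrix m n ℝ) : ‖Aᵀ‖ = ‖A‖ := by
  rw [← conjTranspose_eq_transpose_of_trivial, l2_opNorm_conjTranspose]

omit [DecidableEq m] in
lemma l2_opNorm_transpose_mul_self (A : Matrix m n ℝ) : ‖Aᵀ * A‖ = ‖A‖ * ‖A‖ := by
  rw [← conjTranspose_eq_transpose_of_trivial, l2_opNorm_conjTranspose_mul_self]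

lemma l2_opNorm_one_le : ‖(1 : Matrix n n ℝ)‖ ≤ 1 := by
  rw [cstar_norm_def, map_one]
  exact ContinuousLinearMap.norm_id_le

omit [DecidableEq m] in
lemma l2_opNorm_le_one_of_transpose_mul_self_eq_one {U : Matrix m n ℝ}
    (hU : Uᵀ * U = 1) : ‖U‖ ≤ 1 := by
  have : ‖U‖ * ‖U‖ ≤ 1 := by rw [← l2_opNorm_transpose_mul_self, hU]; exact l2_opNorm_one_le
  nlinarith [norm_nonneg U]

omit [DecidableEq m] in
lemma l2_opNorm_mul_of_transpose_mul_self_eq_one {U : Matrix m n ℝ}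
    (hU : Uᵀ * U = 1) (A : Matrix n l ℝ) : ‖U * A‖ = ‖A‖ := by
  have : ‖U * A‖ * ‖U * A‖ = ‖A‖ * ‖A‖ := by
    rw [← l2_opNorm_transpose_mul_self, transpose_mul, Matrix.mul_assoc, ← Matrix.mul_assoc Uᵀ, hU,
      Matrix.one_mul, l2_opNorm_transpose_mul_self]
  exact mul_self_inj (norm_nonneg _) (norm_nonneg _) |>.mp this

lemma mul_self_le_self_of_l2_opNorm_le_one {R : Matrix n n ℝ} (hR : 0 ≤ R)
    (hR1 : ‖R‖ ≤ 1) : R * R ≤ R := by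
  rw [← sub_nonneg]
  have : R - R * R = cfc (fun x : ℝ => x - x * x) R := by
    rw [cfc_sub _ _ R, cfc_mul _ _ R, cfc_id' ℝ R]
  rw [this]
  refine cfc_nonneg fun x hx => ?_
  have h0 : 0 ≤ x := spectrum_nonneg_of_nonneg hR hx
  have h1 : x ≤ 1 := by
    have := spectrum.subset_closedBall_norm_mul (𝕜 := ℝ) R hx
    rw [Metric.mem_closedBall, dist_zero_right, Real.norm_eq_abs] at this
    nlinarith [le_abs_self x, norm_nonneg R, l2_opNorm_one_le (n := n)]
  nlinarith

lemma dotProduct_mulVec_le_l2_opNorm_mul (B : Matrix n n ℝ) (x : n → ℝ) :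
    x ⬝ᵥ (B *ᵥ x) ≤ ‖B‖ * (x ⬝ᵥ x) := by
  have hcs := real_inner_le_norm (WithLp.toLp 2 x) (toEuclideanCLM (𝕜 := ℝ) B (WithLp.toLp 2 x))
  rw [inner_toEuclideanCLM] at hcs
  calc x ⬝ᵥ (B *ᵥ x)
      ≤ ‖WithLp.toLp 2 x‖ * ‖toEuclideanCLM (𝕜 := ℝ) B (WithLp.toLp 2 x)‖ := hcs
    _ ≤ ‖WithLp.toLp 2 x‖ * (‖B‖ * ‖WithLp.toLp 2 x‖) := by
      gcongr; exact (toEuclideanCLM (𝕜 := ℝ) B).le_opNorm _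
    _ = ‖B‖ * (x ⬝ᵥ x) := by rw [← EuclideanSpace.norm_toLp_sq]; ring

omit [DecidableEq m] in
lemma l2_opNorm_sq_le_of_transpose_mul_self_le {A : Matrix m n ℝ} {B : Matrix n n ℝ}
    (h : Aᵀ * A ≤ B) : ‖A‖ ^ 2 ≤ ‖B‖ := by
  have hB : 0 ≤ ‖B‖ := norm_nonneg B
  suffices ‖A‖ ≤ √‖B‖ by
    simpa [Real.sq_sqrt hB] using pow_le_pow_left₀ (norm_nonneg A) this 2
  refine ContinuousLinearMap.opNorm_le_bound _ (Real.sqrt_nonneg _) fun x => ?_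
  rw [← sq_le_sq₀ (norm_nonneg _) (by positivity), mul_pow, Real.sq_sqrt hB]
  obtain ⟨x, rfl⟩ := (WithLp.equiv 2 (n → ℝ)).symm.surjective x
  have hquad := (le_iff.mp h).dotProduct_mulVec_nonneg x
  rw [star_trivial, sub_mulVec, dotProduct_sub, ← mulVec_dotProduct_mulVec_self] at hquad
  calc ‖toEuclideanLin A (WithLp.toLp 2 x)‖ ^ 2 = (A *ᵥ x) ⬝ᵥ (A *ᵥ x) :=
        EuclideanSpace.norm_toLp_sq _
    _ ≤ x ⬝ᵥ (B *ᵥ x) := by linarith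
    _ ≤ ‖B‖ * (x ⬝ᵥ x) := dotProduct_mulVec_le_l2_opNorm_mul B x
    _ = ‖B‖ * ‖WithLp.toLp 2 x‖ ^ 2 := by rw [EuclideanSpace.norm_toLp_sq]

theorem exists_orthogonal_mul_eq_of_transpose_mul_self_eq {X Y : Matrix m n ℝ}
    (h : Xᵀ * X = Yᵀ * Y) : ∃ H : Matrix m m ℝ, Hᵀ * H = 1 ∧ H * Hᵀ = 1 ∧ H * Y = X := by
  set f := toEuclideanLin Y
  set g := toEuclideanLin X
  have hnorm : ∀ v, ‖g v‖ = ‖f v‖ := fun v => by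
    rw [← sq_eq_sq₀ (norm_nonneg _) (norm_nonneg _)]
    simp only [g, f, toLpLin_apply, EuclideanSpace.norm_toLp_sq, mulVec_dotProduct_mulVec_self, h]
  have hker : LinearMap.ker f ≤ LinearMap.ker g := fun v hv => by
    simpa [LinearMap.mem_ker, ← norm_eq_zero, hnorm] using hv
  -- the isometry `Y v ↦ X v` of the range of `Y`, well defined because `ker Y ≤ ker X`
  let L₀ := (LinearMap.ker f).liftQ g hker ∘ₗ f.quotKerEquivRange.symm.toLinearMap
  have hL₀ : ∀ v, L₀ ⟨f v, LinearMap.mem_range_self f v⟩ = g v := fun v => by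
    simp only [L₀, LinearMap.coe_comp, LinearEquiv.coe_coe, Function.comp_apply,
      LinearMap.quotKerEquivRange_symm_apply_image, Submodule.mkQ_apply, Submodule.liftQ_apply]
  let L : LinearMap.range f →ₗᵢ[ℝ] EuclideanSpace ℝ m :=
    { toLinearMap := L₀
      norm_map' := by
        rintro ⟨_, v, rfl⟩
        exact (congrArg norm (hL₀ v)).trans (hnorm v) }
  let Φ := L.extend.toLinearIsometryEquiv rfl
  have hΦ := Φ.toMatrix_mem_unitaryGroup (EuclideanSpace.basisFun m ℝ) (EuclideanSpace.basisFun m ℝ)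
  rw [mem_unitaryGroup_iff', star_eq_conjTranspose, conjTranspose_eq_transpose_of_trivial] at hΦ
  refine ⟨_, hΦ, mul_eq_one_comm.mp hΦ, toEuclideanLin.injective <| LinearMap.ext fun v => ?_⟩
  rw [toEuclideanLin_eq_toLin_orthonormal, toLin_mul _ (EuclideanSpace.basisFun m ℝ).toBasis,
    toLin_toMatrix]
  exact (L.extend_apply ⟨f v, LinearMap.mem_range_self f v⟩).trans (hL₀ v)

omit [Fintype n] [DecidableEq n] in
lemma transpose_eq_self_of_nonneg {R : Matrix n n ℝ} (hR : 0 ≤ R) : Rᵀ = R := by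
  rw [← conjTranspose_eq_transpose_of_trivial]; exact hR.posSemidef.isHermitian

omit [DecidableEq m] [DecidableEq n] in
lemma mul_transpose_self_nonneg (W : Matrix n m ℝ) : 0 ≤ W * Wᵀ := by
  simpa [conjTranspose_eq_transpose_of_trivial] using (posSemidef_self_mul_conjTranspose W).nonneg

theorem exists_orthogonal_sqrt_mul_eq (W : Matrix n n ℝ) :
    ∃ H : Matrix n n ℝ, Hᵀ * H = 1 ∧ H * Hᵀ = 1 ∧ CFC.sqrt (W * Wᵀ) * H = W := by
  set R := CFC.sqrt (W * Wᵀ)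
  have hRT : Rᵀ = R := transpose_eq_self_of_nonneg (CFC.sqrt_nonneg _)
  obtain ⟨G, hG1, hG2, hGR⟩ := exists_orthogonal_mul_eq_of_transpose_mul_self_eq (X := Wᵀ) (Y := R)
    (by rw [transpose_transpose, hRT, CFC.sqrt_mul_sqrt_self _ (mul_transpose_self_nonneg W)])
  refine ⟨Gᵀ, by rwa [transpose_transpose], by rwa [transpose_transpose], ?_⟩
  rw [← hRT, ← transpose_mul, hGR, transpose_transpose]

theorem exists_orthogonal_l2_opNorm_mul_sub_sq_le (A : Matrix m n ℝ) {W : Matrix n n ℝ}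
    (hW : ‖W‖ ≤ 1) :
    ∃ H : Matrix n n ℝ, Hᵀ * H = 1 ∧ H * Hᵀ = 1 ∧
      ‖A * (H - W)‖ ^ 2 ≤ ‖A * (1 - W * Wᵀ) * Aᵀ‖ := by
  obtain ⟨H, hH1, hH2, hRH⟩ := exists_orthogonal_sqrt_mul_eq W
  refine ⟨H, hH1, hH2, ?_⟩
  set R := CFC.sqrt (W * Wᵀ)
  have hR0 : 0 ≤ R := CFC.sqrt_nonneg _
  have hRT : Rᵀ = R := transpose_eq_self_of_nonneg hR0
  have hRR : R * R = W * Wᵀ := CFC.sqrt_mul_sqrt_self _ (mul_transpose_self_nonneg W)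
  have hR1 : ‖R‖ ≤ 1 := by
    have : ‖R‖ * ‖R‖ = ‖W‖ * ‖W‖ := by
      rw [← l2_opNorm_transpose_mul_self, hRT, hRR, ← l2_opNorm_transpose W,
        ← l2_opNorm_transpose_mul_self, transpose_transpose]
    nlinarith [norm_nonneg R, norm_nonneg W]
  -- `(1 - R)² ≤ 1 - R²` since `R² ≤ R`
  have hconj : ((1 - R) * Aᵀ)ᵀ * ((1 - R) * Aᵀ) ≤ A * (1 - W * Wᵀ) * Aᵀ := by
    have hpsd := ((le_iff.mp (mul_self_le_self_of_l2_opNorm_le_one hR0 hR1)).smul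
      (zero_le_two (α := ℝ))).mul_mul_conjTranspose_same A
    rw [le_iff, ← hRR]
    convert hpsd using 1
    rw [conjTranspose_eq_transpose_of_trivial, transpose_mul, transpose_transpose, transpose_sub,
      transpose_one, hRT, ← Matrix.mul_assoc (A * (1 - R)), Matrix.mul_assoc A (1 - R),
      ← Matrix.sub_mul, ← Matrix.mul_sub]
    congr 2
    rw [two_smul]
    noncomm_ring
  calc ‖A * (H - W)‖ ^ 2 = ‖A * (1 - R) * H‖ ^ 2 := by
        rw [← hRH, Matrix.mul_assoc, Matrix.sub_mul, Matrix.one_mul]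
    _ ≤ ‖A * (1 - R)‖ ^ 2 := by
      gcongr
      calc ‖A * (1 - R) * H‖ ≤ ‖A * (1 - R)‖ * ‖H‖ := l2_opNorm_mul _ _
        _ ≤ ‖A * (1 - R)‖ := mul_le_of_le_one_right (norm_nonneg _)
          (l2_opNorm_le_one_of_transpose_mul_self_eq_one hH1)
    _ = ‖(1 - R) * Aᵀ‖ ^ 2 := by
      rw [← l2_opNorm_transpose, transpose_mul, transpose_sub, transpose_one, hRT]
    _ ≤ ‖A * (1 - W * Wᵀ) * Aᵀ‖ := l2_opNorm_sq_le_of_transpose_mul_self_le hconj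

lemma transpose_mul_self_one_sub_mul_transpose {U : Matrix m n ℝ} (hU : Uᵀ * U = 1) :
    (1 - U * Uᵀ)ᵀ * (1 - U * Uᵀ) = 1 - U * Uᵀ := by
  have hUU : U * Uᵀ * (U * Uᵀ) = U * Uᵀ := by
    rw [Matrix.mul_assoc, ← Matrix.mul_assoc Uᵀ, hU, Matrix.one_mul]
  rw [transpose_sub, transpose_one, transpose_mul, transpose_transpose, Matrix.sub_mul,
    Matrix.mul_sub, Matrix.mul_sub, hUU]
  simp only [Matrix.one_mul, Matrix.mul_one]
  abel

lemma l2_opNorm_mul_one_sub_mul_transpose_mul_le {Ubar U : Matrix m k ℝ} {Vbar V : Matrix n k ℝ}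
    {Sbar S : Matrix k k ℝ} (hUbar : Ubarᵀ * Ubar = 1) (hVbar : Vbarᵀ * Vbar = 1)
    (hU : Uᵀ * U = 1) (hSbar : Sbarᵀ = Sbar) :
    ‖Sbar * (1 - Ubarᵀ * U * (Ubarᵀ * U)ᵀ) * Sbarᵀ‖ ≤ ‖Ubar * Sbar * Vbarᵀ - U * S * Vᵀ‖ ^ 2 := by
  set Δ := Ubar * Sbar * Vbarᵀ - U * S * Vᵀ
  set P := 1 - U * Uᵀ
  have hPP : Pᵀ * P = P := transpose_mul_self_one_sub_mul_transpose hU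
  have hPU : P * U = 0 := by
    rw [Matrix.sub_mul, Matrix.one_mul, Matrix.mul_assoc, hU, Matrix.mul_one, sub_self]
  have hX : P * Δ * Vbar = P * Ubar * Sbar := by
    simp only [Δ, Matrix.mul_sub, Matrix.sub_mul, Matrix.mul_assoc, hVbar, Matrix.mul_one]
    rw [← Matrix.mul_assoc P U, hPU, Matrix.zero_mul, sub_zero]
  have hgram :
      Sbar * (1 - Ubarᵀ * U * (Ubarᵀ * U)ᵀ) * Sbarᵀ = (P * Δ * Vbar)ᵀ * (P * Δ * Vbar) := by
    calc Sbar * (1 - Ubarᵀ * U * (Ubarᵀ * U)ᵀ) * Sbarᵀ = Sbarᵀ * (Ubarᵀ * P * Ubar) * Sbar := by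
          simp only [P, hSbar, transpose_mul, transpose_transpose, Matrix.mul_sub, Matrix.sub_mul,
            Matrix.mul_one, Matrix.mul_assoc, hUbar]
      _ = Sbarᵀ * (Ubarᵀ * (Pᵀ * P) * Ubar) * Sbar := by rw [hPP]
      _ = (P * Δ * Vbar)ᵀ * (P * Δ * Vbar) := by
          simp only [hX, transpose_mul, Matrix.mul_assoc]
  have hP : ‖P‖ ≤ 1 := by
    have h := l2_opNorm_transpose_mul_self P
    rw [hPP] at h
    nlinarith [norm_nonneg P]
  rw [hgram, l2_opNorm_transpose_mul_self, ← sq]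
  gcongr
  calc ‖P * Δ * Vbar‖ ≤ ‖P‖ * ‖Δ‖ * ‖Vbar‖ :=
        (l2_opNorm_mul _ _).trans (by gcongr; exact l2_opNorm_mul _ _)
    _ ≤ 1 * ‖Δ‖ * 1 := by gcongr; exact l2_opNorm_le_one_of_transpose_mul_self_eq_one hVbar
    _ = ‖Δ‖ := by ring

theorem exists_orthogonal_l2_opNorm_mul_sub_le {Ubar U : Matrix m k ℝ} {Vbar V : Matrix n k ℝ}
    {Sbar S : Matrix k k ℝ} (hUbar : Ubarᵀ * Ubar = 1) (hVbar : Vbarᵀ * Vbar = 1)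
    (hU : Uᵀ * U = 1) (hSbar : Sbarᵀ = Sbar) (hS : Sᵀ = S) :
    ∃ H : Matrix k k ℝ, Hᵀ * H = 1 ∧ H * Hᵀ = 1 ∧
      ‖Vbar * Sbar * H - V * S‖ ≤ 2 * ‖Ubar * Sbar * Vbarᵀ - U * S * Vᵀ‖ := by
  set Δ := Ubar * Sbar * Vbarᵀ - U * S * Vᵀ
  set W := Ubarᵀ * U
  have hW : ‖W‖ ≤ 1 := by
    calc ‖W‖ ≤ ‖Ubarᵀ‖ * ‖U‖ := l2_opNorm_mul _ _
      _ ≤ 1 * 1 := by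
        rw [l2_opNorm_transpose]
        gcongr <;> exact l2_opNorm_le_one_of_transpose_mul_self_eq_one ‹_›
      _ = 1 := one_mul 1
  obtain ⟨H, hH1, hH2, hkey⟩ := exists_orthogonal_l2_opNorm_mul_sub_sq_le Sbar hW
  refine ⟨H, hH1, hH2, ?_⟩
  have hSH : ‖Sbar * (H - W)‖ ≤ ‖Δ‖ := by
    rw [← sq_le_sq₀ (norm_nonneg _) (norm_nonneg _)]
    exact hkey.trans (l2_opNorm_mul_one_sub_mul_transpose_mul_le hUbar hVbar hU hSbar)
  have hΔU : ‖Δᵀ * U‖ ≤ ‖Δ‖ := by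
    calc ‖Δᵀ * U‖ ≤ ‖Δᵀ‖ * ‖U‖ := l2_opNorm_mul _ _
      _ ≤ ‖Δ‖ := by
        rw [l2_opNorm_transpose]
        exact mul_le_of_le_one_right (norm_nonneg _)
          (l2_opNorm_le_one_of_transpose_mul_self_eq_one hU)
  calc ‖Vbar * Sbar * H - V * S‖ = ‖Vbar * (Sbar * (H - W)) + Δᵀ * U‖ := by
        simp only [Δ, W, transpose_sub, transpose_mul, transpose_transpose, hSbar, hS,
          Matrix.mul_sub, Matrix.sub_mul, Matrix.mul_assoc, hU, Matrix.mul_one]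
        abel_nf
    _ ≤ ‖Vbar * (Sbar * (H - W))‖ + ‖Δᵀ * U‖ := norm_add_le _ _
    _ ≤ 2 * ‖Δ‖ := by rw [l2_opNorm_mul_of_transpose_mul_self_eq_one hVbar]; linarith

end Matrix

theorem opNorm_eq_l2_opNorm {n m : ℕ} (A : Matrix (Fin n) (Fin m) ℝ) : opNorm A = ‖A‖ := rfl

theorem singVal_le_opNorm_sub {n m k : ℕ} (A B : Matrix (Fin n) (Fin m) ℝ) (hB : B.rank < k) :
    singVal k A ≤ opNorm (A - B) :=
  csInf_le ⟨0, by rintro _ ⟨C, -, rfl⟩; exact norm_nonneg _⟩ ⟨B, hB, rfl⟩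

theorem l2_opNorm_sub_le_two_mul_of_rank_lt {n m k : ℕ} {M Mbar Mhat : Matrix (Fin n) (Fin m) ℝ}
    (hrank : Mbar.rank < k) (hres : opNorm (M - Mhat) = singVal k M) :
    ‖Mbar - Mhat‖ ≤ 2 * ‖M - Mbar‖ := by
  have hσ : ‖M - Mhat‖ ≤ ‖M - Mbar‖ := by
    rw [← opNorm_eq_l2_opNorm, ← opNorm_eq_l2_opNorm, hres]
    exact singVal_le_opNorm_sub M Mbar hrank
  calc ‖Mbar - Mhat‖ ≤ ‖Mbar - M‖ + ‖M - Mhat‖ := norm_sub_le_norm_sub_add_norm_sub _ _ _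
    _ ≤ 2 * ‖M - Mbar‖ := by rw [norm_sub_rev Mbar]; linarith

theorem stmt_0_general {n m r : ℕ}
    (Mbar E M : Matrix (Fin n) (Fin m) ℝ)
    (Ubar : Matrix (Fin n) (Fin r) ℝ) (Sbar : Matrix (Fin r) (Fin r) ℝ)
    (Vbar : Matrix (Fin m) (Fin r) ℝ)
    (U : Matrix (Fin n) (Fin r) ℝ) (S : Matrix (Fin r) (Fin r) ℝ)
    (V : Matrix (Fin m) (Fin r) ℝ)
    (hrank : Mbar.rank = r)
    (hM : M = Mbar + E)
    (hUbar : Ubarᵀ * Ubar = 1) (hVbar : Vbarᵀ * Vbar = 1)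
    (hSbarDiag : Sbar.IsDiag)
    (hMbar : Mbar = Ubar * Sbar * Vbarᵀ)
    (hU : Uᵀ * U = 1)
    (hS : S = Matrix.diagonal (fun i : Fin r => singVal (i.val + 1) M))
    (hres : opNorm (M - U * S * Vᵀ) = singVal (r + 1) M) :
    ∃ H : Matrix (Fin r) (Fin r) ℝ, Hᵀ * H = 1 ∧ H * Hᵀ = 1 ∧
      opNorm (Vbar * Sbar * H - V * S) ≤ 4 * opNorm E := by
  have hST : Sᵀ = S := by rw [hS, diagonal_transpose]
  obtain ⟨H, hH1, hH2, hH⟩ :=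
    exists_orthogonal_l2_opNorm_mul_sub_le (V := V) hUbar hVbar hU hSbarDiag.isSymm hST
  rw [← hMbar] at hH
  have hΔ := l2_opNorm_sub_le_two_mul_of_rank_lt (by omega : Mbar.rank < r + 1) hres
  rw [hM, add_sub_cancel_left] at hΔ
  refine ⟨H, hH1, hH2, ?_⟩
  rw [opNorm_eq_l2_opNorm, opNorm_eq_l2_opNorm]
  linarith

/-- existence of a rotation aligning the compact SVD of a rank-`r`
matrix with the rank-`r` truncated SVD of its perturbation. -/
theorem stmt_0 {n m r : ℕ}
    (Mbar E M : Matrix (Fin n) (Fin m) ℝ)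
    (Ubar : Matrix (Fin n) (Fin r) ℝ) (Sbar : Matrix (Fin r) (Fin r) ℝ)
    (Vbar : Matrix (Fin m) (Fin r) ℝ)
    (U : Matrix (Fin n) (Fin r) ℝ) (S : Matrix (Fin r) (Fin r) ℝ)
    (V : Matrix (Fin m) (Fin r) ℝ)
    (hrank : Mbar.rank = r)
    (hM : M = Mbar + E)
    (hUbar : Ubarᵀ * Ubar = 1) (hVbar : Vbarᵀ * Vbar = 1)
    (hSbarDiag : Sbar.IsDiag) (hSbarPos : ∀ i, 0 < Sbar i i)
    (hMbar : Mbar = Ubar * Sbar * Vbarᵀ)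
    (hU : Uᵀ * U = 1) (hV : Vᵀ * V = 1)
    (hS : S = Matrix.diagonal (fun i : Fin r => singVal (i.val + 1) M))
    (hres : opNorm (M - U * S * Vᵀ) = singVal (r + 1) M) :
    ∃ H : Matrix (Fin r) (Fin r) ℝ, Hᵀ * H = 1 ∧ H * Hᵀ = 1 ∧
      opNorm (Vbar * Sbar * H - V * S) ≤ 4 * opNorm E :=
  stmt_0_general Mbar E M Ubar Sbar Vbar U S V hrank hM hUbar hVbar hSbarDiag hMbar hU hS hres
end

section
/- Let $\bar{X}, X \in \mathbb{R}^{t \times r}$, let $\rho > 0$, and define $\bar{\Omega} = \rho I + \bar{X}^\top \bar{X}$, $\Omega = \rho I + X^\top X$, and $\Xi = X - \bar{X}$. Then for every vector $a \in \mathbb{R}^r$ it holds that $\|a\|_{\bar{\Omega}} \leq \|a\|_{\Omega} \,(1 + \rho^{-1/2}\|\Xi\|)$. -/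
open Matrix

lemma vecNorm_eq {d : ℕ} (a : Fin d → ℝ) :
    vecNorm a = ‖(WithLp.equiv 2 (Fin d → ℝ)).symm a‖ := by
  rw [EuclideanSpace.norm_eq, vecNorm, dotProduct]
  congr 1
  refine Finset.sum_congr rfl fun i _ => ?_
  simp [sq]

lemma vecNorm_nonneg {d : ℕ} (a : Fin d → ℝ) : 0 ≤ vecNorm a := Real.sqrt_nonneg _

lemma sq_vecNorm {d : ℕ} (a : Fin d → ℝ) : vecNorm a ^ 2 = a ⬝ᵥ a := by
  rw [vecNorm, Real.sq_sqrt]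
  exact Finset.sum_nonneg fun i _ => mul_self_nonneg _

lemma opNorm_nonneg {n m : ℕ} (A : Matrix (Fin n) (Fin m) ℝ) : 0 ≤ opNorm A := norm_nonneg _

lemma mulVec_norm_le {n m : ℕ} (A : Matrix (Fin n) (Fin m) ℝ) (a : Fin m → ℝ) :
    vecNorm (A *ᵥ a) ≤ opNorm A * vecNorm a := by
  rw [vecNorm_eq, vecNorm_eq]
  have h := (LinearMap.toContinuousLinearMap (Matrix.toEuclideanLin A)).le_opNorm
    ((WithLp.equiv 2 (Fin m → ℝ)).symm a)
  have he : (LinearMap.toContinuousLinearMap (Matrix.toEuclideanLin A))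
      ((WithLp.equiv 2 (Fin m → ℝ)).symm a) = (WithLp.equiv 2 (Fin n → ℝ)).symm (A *ᵥ a) := by
    simp [Matrix.toEuclideanLin_apply]
  rw [he] at h
  exact h

lemma vecNorm_sub_le {d : ℕ} (x y : Fin d → ℝ) :
    vecNorm (x - y) ≤ vecNorm x + vecNorm y := by
  rw [vecNorm_eq, vecNorm_eq, vecNorm_eq]
  have : (WithLp.equiv 2 (Fin d → ℝ)).symm (x - y)
      = (WithLp.equiv 2 (Fin d → ℝ)).symm x - (WithLp.equiv 2 (Fin d → ℝ)).symm y := rfl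
  rw [this]
  exact norm_sub_le _ _

lemma quadform_eq {t r : ℕ} (X : Matrix (Fin t) (Fin r) ℝ) (ρ : ℝ) (a : Fin r → ℝ) :
    a ⬝ᵥ ((ρ • (1 : Matrix (Fin r) (Fin r) ℝ) + Xᵀ * X) *ᵥ a)
      = ρ * (a ⬝ᵥ a) + (X *ᵥ a) ⬝ᵥ (X *ᵥ a) := by
  rw [Matrix.add_mulVec, dotProduct_add, Matrix.smul_mulVec, Matrix.one_mulVec,
    dotProduct_smul, ← Matrix.mulVec_mulVec, Matrix.dotProduct_mulVec,
    Matrix.vecMul_transpose]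
  simp [smul_eq_mul]

/-- comparison of weighted norms under a design-matrix perturbation. -/
theorem stmt_1 {t r : ℕ} (Xbar X : Matrix (Fin t) (Fin r) ℝ) (ρ : ℝ) (hρ : 0 < ρ)
    (Ωbar Ω : Matrix (Fin r) (Fin r) ℝ) (Ξ : Matrix (Fin t) (Fin r) ℝ)
    (hΩbar : Ωbar = ρ • (1 : Matrix (Fin r) (Fin r) ℝ) + Xbarᵀ * Xbar)
    (hΩ : Ω = ρ • (1 : Matrix (Fin r) (Fin r) ℝ) + Xᵀ * X)
    (hΞ : Ξ = X - Xbar) :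
    ∀ a : Fin r → ℝ, wnorm Ωbar a ≤ wnorm Ω a * (1 + (Real.sqrt ρ)⁻¹ * opNorm Ξ) := by
  intro a
  set s := Real.sqrt ρ with hs
  have hs0 : 0 < s := Real.sqrt_pos.mpr hρ
  have hss : s * s = ρ := Real.mul_self_sqrt hρ.le
  set na := vecNorm a with hna
  set v := vecNorm (X *ᵥ a) with hv
  set w := vecNorm (Xbar *ᵥ a) with hw
  set N := opNorm Ξ with hN
  have hna0 : 0 ≤ na := vecNorm_nonneg a
  have hv0 : 0 ≤ v := vecNorm_nonneg _
  have hw0 : 0 ≤ w := vecNorm_nonneg _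
  have hN0 : 0 ≤ N := opNorm_nonneg _
  -- triangle inequality: w ≤ v + N * na
  have htri : w ≤ v + N * na := by
    have h1 : Xbar *ᵥ a = X *ᵥ a - Ξ *ᵥ a := by
      rw [hΞ, Matrix.sub_mulVec]; ring
    calc w = vecNorm (X *ᵥ a - Ξ *ᵥ a) := by rw [hw, h1]
      _ ≤ vecNorm (X *ᵥ a) + vecNorm (Ξ *ᵥ a) := vecNorm_sub_le _ _
      _ ≤ v + N * na := by
          have := mulVec_norm_le Ξ a
          linarith
  -- rewrite both wnorms
  have hQbar : a ⬝ᵥ (Ωbar *ᵥ a) = ρ * na ^ 2 + w ^ 2 := by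
    rw [hΩbar, quadform_eq, sq_vecNorm, sq_vecNorm]
  have hQ : a ⬝ᵥ (Ω *ᵥ a) = ρ * na ^ 2 + v ^ 2 := by
    rw [hΩ, quadform_eq, sq_vecNorm, sq_vecNorm]
  rw [wnorm, wnorm, hQbar, hQ]
  set c := s⁻¹ * N with hc
  have hc0 : 0 ≤ c := mul_nonneg (inv_nonneg.mpr hs0.le) hN0
  have hsc : s * c = N := by
    rw [hc]; field_simp
  have hkey : ρ * na ^ 2 + w ^ 2 ≤ (ρ * na ^ 2 + v ^ 2) * (1 + c) ^ 2 := by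
    have hw2 : w ^ 2 ≤ (v + s * c * na) ^ 2 := by
      rw [hsc]; exact pow_le_pow_left₀ hw0 htri 2
    rw [← hss]
    nlinarith [mul_nonneg hc0 (sq_nonneg (s * na - v)),
      mul_nonneg hc0 (sq_nonneg (s * na)), mul_nonneg hc0 (sq_nonneg v),
      mul_nonneg (mul_nonneg hc0 hc0) (sq_nonneg v)]
  calc Real.sqrt (ρ * na ^ 2 + w ^ 2)
      ≤ Real.sqrt ((ρ * na ^ 2 + v ^ 2) * (1 + c) ^ 2) := Real.sqrt_le_sqrt hkey
    _ = Real.sqrt (ρ * na ^ 2 + v ^ 2) * (1 + c) := by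
        rw [Real.sqrt_mul (by positivity), Real.sqrt_sq (by positivity)]
end

section
/- Let $\bar{X}, X \in \mathbb{R}^{t \times r}$, let $\rho > 0$, define $\bar{\Omega} = \rho I + \bar{X}^\top \bar{X}$, $\Omega = \rho I + X^\top X$, and $\Xi = X - \bar{X}$. Then for every vector $a \in \mathbb{R}^r$ it holds that $\|a\|_{\bar{\Omega}^{-1}} \leq (1 + \rho^{-1/2}\|\Xi\|)\,\|a\|_{\Omega^{-1}}$. -/
open Matrix

/-!
Write `Ω_Y = ρ I + YᵀY`, so that `‖u‖_{Ω_Y}² = ρ‖u‖² + ‖Yu‖²`. Since `Xu = X̄u + Ξu`, the triangle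
inequality gives `‖u‖_Ω ≤ ‖u‖_Ω̄ + ‖Ξ‖‖u‖`, and `√ρ‖u‖ ≤ ‖u‖_Ω̄`, hence
`‖u‖_Ω ≤ (1 + ρ^{-1/2}‖Ξ‖)‖u‖_Ω̄`. Such a comparison of norms dualises to the reverse comparison of the
inverse norms: with `u = Ω̄⁻¹a` and `v = Ω⁻¹a`, `‖a‖²_{Ω̄⁻¹} = aᵀu = ⟨v, u⟩_Ω ≤ ‖v‖_Ω‖u‖_Ω` by
Cauchy–Schwarz, and `‖v‖_Ω = ‖a‖_{Ω⁻¹}`, `‖u‖_Ω̄ = ‖a‖_{Ω̄⁻¹}`.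
-/

lemma vecNorm_eq_norm_toLp {d : ℕ} (a : Fin d → ℝ) : vecNorm a = ‖WithLp.toLp 2 a‖ := by
  rw [vecNorm, norm_eq_sqrt_real_inner, EuclideanSpace.inner_toLp_toLp, star_trivial]

lemma vecNorm_add_le {d : ℕ} (a b : Fin d → ℝ) : vecNorm (a + b) ≤ vecNorm a + vecNorm b := by
  simpa only [vecNorm_eq_norm_toLp, WithLp.toLp_add] using
    norm_add_le (WithLp.toLp 2 a) (WithLp.toLp 2 b)

lemma vecNorm_mulVec_le {n m : ℕ} (A : Matrix (Fin n) (Fin m) ℝ) (b : Fin m → ℝ) :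
    vecNorm (A *ᵥ b) ≤ opNorm A * vecNorm b := by
  rw [vecNorm_eq_norm_toLp, vecNorm_eq_norm_toLp]
  exact (LinearMap.toContinuousLinearMap (Matrix.toEuclideanLin A)).le_opNorm (WithLp.toLp 2 b)

lemma dotProduct_mulVec_comm_of_isSymm {n : Type*} [Fintype n] {Ω : Matrix n n ℝ}
    (hΩ : Ω.IsSymm) (x y : n → ℝ) : x ⬝ᵥ (Ω *ᵥ y) = y ⬝ᵥ (Ω *ᵥ x) := by
  rw [dotProduct_mulVec, ← mulVec_transpose, hΩ.eq, dotProduct_comm]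

lemma sq_dotProduct_mulVec_le_of_posSemidef {n : Type*} [Fintype n] {Ω : Matrix n n ℝ}
    (hΩ : Ω.PosSemidef) (x y : n → ℝ) :
    (x ⬝ᵥ (Ω *ᵥ y)) ^ 2 ≤ (x ⬝ᵥ (Ω *ᵥ x)) * (y ⬝ᵥ (Ω *ᵥ y)) := by
  classical
  have hsymm := dotProduct_mulVec_comm_of_isSymm (isHermitian_iff_isSymm.mp hΩ.isHermitian) x y
  have := LinearMap.BilinForm.apply_mul_apply_le_of_forall_zero_le (Matrix.toBilin' Ω)
    (fun x => by
      simpa only [Matrix.toBilin'_apply', star_trivial] using hΩ.dotProduct_mulVec_nonneg x) x y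
  simp only [Matrix.toBilin'_apply', ← hsymm] at this
  rwa [sq]

lemma sqrt_add_sq_le_sqrt_add_sq_add {A p q e : ℝ} (hA : 0 ≤ A) (hp : 0 ≤ p) (he : 0 ≤ e)
    (hq : 0 ≤ q) (hqpe : q ≤ p + e) : √(A + q ^ 2) ≤ √(A + p ^ 2) + e := by
  have hp_le : p ≤ √(A + p ^ 2) := Real.le_sqrt_of_sq_le (by linarith)
  rw [Real.sqrt_le_iff]
  refine ⟨by positivity, ?_⟩
  nlinarith [Real.sq_sqrt (show 0 ≤ A + p ^ 2 by positivity)]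

lemma dotProduct_regGram_mulVec {t r : Type*} [Fintype t] [Fintype r] [DecidableEq r]
    (X : Matrix t r ℝ) (ρ : ℝ) (x y : r → ℝ) :
    x ⬝ᵥ ((ρ • (1 : Matrix r r ℝ) + Xᵀ * X) *ᵥ y) = ρ * (x ⬝ᵥ y) + (X *ᵥ x) ⬝ᵥ (X *ᵥ y) := by
  rw [add_mulVec, dotProduct_add, smul_mulVec, one_mulVec, dotProduct_smul, ← mulVec_mulVec,
    dotProduct_mulVec, vecMul_transpose, smul_eq_mul]

lemma wnorm_regGram {t r : ℕ} (X : Matrix (Fin t) (Fin r) ℝ) (ρ : ℝ) (u : Fin r → ℝ) :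
    wnorm (ρ • (1 : Matrix (Fin r) (Fin r) ℝ) + Xᵀ * X) u
      = √(ρ * vecNorm u ^ 2 + vecNorm (X *ᵥ u) ^ 2) := by
  rw [wnorm, dotProduct_regGram_mulVec, sq_vecNorm, sq_vecNorm]

lemma sqrt_mul_vecNorm_le_wnorm_regGram {t r : ℕ} (X : Matrix (Fin t) (Fin r) ℝ) {ρ : ℝ}
    (hρ : 0 ≤ ρ) (u : Fin r → ℝ) :
    √ρ * vecNorm u ≤ wnorm (ρ • (1 : Matrix (Fin r) (Fin r) ℝ) + Xᵀ * X) u := by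
  calc √ρ * vecNorm u = √(ρ * vecNorm u ^ 2) := by
        rw [Real.sqrt_mul hρ, Real.sqrt_sq (vecNorm_nonneg u)]
    _ ≤ _ := by
        rw [wnorm_regGram]
        exact Real.sqrt_le_sqrt (le_add_of_nonneg_right (sq_nonneg _))

lemma wnorm_regGram_le {t r : ℕ} (X Xbar : Matrix (Fin t) (Fin r) ℝ) {ρ : ℝ} (hρ : 0 < ρ)
    (u : Fin r → ℝ) :
    wnorm (ρ • (1 : Matrix (Fin r) (Fin r) ℝ) + Xᵀ * X) u
      ≤ (1 + (√ρ)⁻¹ * opNorm (X - Xbar))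
          * wnorm (ρ • (1 : Matrix (Fin r) (Fin r) ℝ) + Xbarᵀ * Xbar) u := by
  set w := wnorm (ρ • (1 : Matrix (Fin r) (Fin r) ℝ) + Xbarᵀ * Xbar) u
  have hXu : vecNorm (X *ᵥ u) ≤ vecNorm (Xbar *ᵥ u) + opNorm (X - Xbar) * vecNorm u :=
    calc vecNorm (X *ᵥ u) = vecNorm (Xbar *ᵥ u + (X - Xbar) *ᵥ u) := by
          rw [sub_mulVec, add_sub_cancel]
      _ ≤ _ := (vecNorm_add_le _ _).trans (by gcongr; exact vecNorm_mulVec_le _ _)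
  have hu : vecNorm u ≤ (√ρ)⁻¹ * w := by
    rw [le_inv_mul_iff₀ (Real.sqrt_pos.mpr hρ)]
    exact sqrt_mul_vecNorm_le_wnorm_regGram Xbar hρ.le u
  calc wnorm (ρ • (1 : Matrix (Fin r) (Fin r) ℝ) + Xᵀ * X) u
      ≤ w + opNorm (X - Xbar) * vecNorm u := by
        rw [wnorm_regGram, show w = _ from wnorm_regGram Xbar ρ u]
        exact sqrt_add_sq_le_sqrt_add_sq_add (by positivity) (vecNorm_nonneg _)
          (mul_nonneg (opNorm_nonneg _) (vecNorm_nonneg _)) (vecNorm_nonneg _) hXu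
    _ ≤ w + opNorm (X - Xbar) * ((√ρ)⁻¹ * w) := by gcongr; exact opNorm_nonneg _
    _ = (1 + (√ρ)⁻¹ * opNorm (X - Xbar)) * w := by ring

lemma wnorm_inv_le_of_wnorm_le {r : ℕ} {Ω Ω' : Matrix (Fin r) (Fin r) ℝ} (hΩ : Ω.PosDef)
    (hΩ' : IsUnit Ω'.det) {c : ℝ} (hc : 0 ≤ c) (h : ∀ u, wnorm Ω u ≤ c * wnorm Ω' u)
    (a : Fin r → ℝ) : wnorm Ω'⁻¹ a ≤ c * wnorm Ω⁻¹ a := by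
  set u := Ω'⁻¹ *ᵥ a
  set v := Ω⁻¹ *ᵥ a
  have hu : Ω' *ᵥ u = a := by rw [mulVec_mulVec, mul_nonsing_inv _ hΩ', one_mulVec]
  have hv : Ω *ᵥ v = a := by
    rw [mulVec_mulVec, mul_nonsing_inv _ (isUnit_iff_isUnit_det _ |>.mp hΩ.isUnit), one_mulVec]
  have hw'u : wnorm Ω' u = √(a ⬝ᵥ u) := by rw [wnorm, hu, dotProduct_comm]
  have hw : wnorm Ω⁻¹ a = wnorm Ω v := by rw [wnorm, wnorm, hv, dotProduct_comm]
  -- `a ⬝ᵥ u` is the `Ω`-inner product of `v` and `u`, so Cauchy–Schwarz applies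
  have hCS : a ⬝ᵥ u ≤ wnorm Ω v * wnorm Ω u := by
    rw [← hv, dotProduct_comm, dotProduct_mulVec_comm_of_isSymm
      (isHermitian_iff_isSymm.mp hΩ.isHermitian), wnorm, wnorm,
      ← Real.sqrt_mul (by simpa using hΩ.posSemidef.dotProduct_mulVec_nonneg v)]
    exact Real.le_sqrt_of_sq_le (sq_dotProduct_mulVec_le_of_posSemidef hΩ.posSemidef v u)
  change √(a ⬝ᵥ u) ≤ c * wnorm Ω⁻¹ a
  rw [hw]
  rcases le_or_gt (a ⬝ᵥ u) 0 with hau_nonpos | hau_pos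
  · rw [Real.sqrt_eq_zero'.mpr hau_nonpos]
    exact mul_nonneg hc (Real.sqrt_nonneg _)
  · refine le_of_mul_le_mul_right ?_ (Real.sqrt_pos.mpr hau_pos)
    calc √(a ⬝ᵥ u) * √(a ⬝ᵥ u) = a ⬝ᵥ u := Real.mul_self_sqrt hau_pos.le
      _ ≤ wnorm Ω v * wnorm Ω u := hCS
      _ ≤ wnorm Ω v * (c * √(a ⬝ᵥ u)) :=
          hw'u ▸ mul_le_mul_of_nonneg_left (h u) (Real.sqrt_nonneg _)
      _ = c * wnorm Ω v * √(a ⬝ᵥ u) := by ring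

lemma posDef_regGram {t r : ℕ} (X : Matrix (Fin t) (Fin r) ℝ) {ρ : ℝ} (hρ : 0 < ρ) :
    (ρ • (1 : Matrix (Fin r) (Fin r) ℝ) + Xᵀ * X).PosDef := by
  refine PosDef.add_posSemidef ?_ (by simpa using posSemidef_conjTranspose_mul_self X)
  rw [smul_one_eq_diagonal]
  exact posDef_diagonal_iff.mpr fun _ => hρ

/-- comparison of inverse weighted norms under a design-matrix perturbation. -/
theorem stmt_2 {t r : ℕ} (Xbar X : Matrix (Fin t) (Fin r) ℝ) (ρ : ℝ) (hρ : 0 < ρ)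
    (Ωbar Ω : Matrix (Fin r) (Fin r) ℝ) (Ξ : Matrix (Fin t) (Fin r) ℝ)
    (hΩbar : Ωbar = ρ • (1 : Matrix (Fin r) (Fin r) ℝ) + Xbarᵀ * Xbar)
    (hΩ : Ω = ρ • (1 : Matrix (Fin r) (Fin r) ℝ) + Xᵀ * X)
    (hΞ : Ξ = X - Xbar) :
    ∀ a : Fin r → ℝ, wnorm Ωbar⁻¹ a ≤ (1 + (Real.sqrt ρ)⁻¹ * opNorm Ξ) * wnorm Ω⁻¹ a := by
  subst hΩbar hΩ hΞ
  exact wnorm_inv_le_of_wnorm_le (posDef_regGram X hρ)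
    ((isUnit_iff_isUnit_det _).mp (posDef_regGram Xbar hρ).isUnit)
    (by have := opNorm_nonneg (X - Xbar); positivity) (wnorm_regGram_le X Xbar hρ)
end
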